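/- If φ ∈ F(M)** is normal, then φ = Σ_{n∈ℤ} φ ∘ W_{Λ_n} = lim_{n→∞} φ ∘ W_{Π_n}, where the limit is in the norm of F(M)**. -/

import Mathlib

/-!
The key fact is that a normal `φ` does not see functions vanishing on a large dyadic annulus
`2^(-N) ≤ d(x, 0) ≤ 2^N`: `|φ g| ≤ ε ‖g‖` for such `g`. Otherwise, splitting into positive and
negative parts and truncating with `Π_m` (normality again) gives nonnegative bumps with
`|φ| > ε/2` at ever more extreme scales; they are disjointly supported, so their partial sums
increase boundedly to a Lipschitz function, and normality forces `φ` of the bumps to tend to `0`.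

Both `W_{Π_n} f - f` and `∑_{n ∈ S} W_{Λ_n} f - f` are `f` times a radial cutoff that vanishes on
such an annulus once `n` or `S` is large, and whose oscillation is controlled relative to
`d(x, 0)`; hence they have norm `O(‖f‖)`, which gives convergence in operator norm.
-/

open Filter Metric Topology NNReal


/-- The set of Lipschitz functions `M → ℝ` vanishing at the base point, as a
submodule of `M → ℝ`. -/
def Lip0Sub (M : Type*) [MetricSpace M] (base : M) : Submodule ℝ (M → ℝ) where
  carrier := {f | (∃ K, LipschitzWith K f) ∧ f base = 0}
  add_mem' := by
    rintro f g ⟨⟨Kf, hf⟩, hf0⟩ ⟨⟨Kg, hg⟩, hg0⟩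
    exact ⟨⟨Kf + Kg, hf.add hg⟩, by simp [Pi.add_apply, hf0, hg0]⟩
  zero_mem' := ⟨⟨0, LipschitzWith.const 0⟩, rfl⟩
  smul_mem' := by
    rintro c f ⟨⟨Kf, hf⟩, hf0⟩
    exact ⟨⟨‖c‖₊ * Kf, (lipschitzWith_smul c).comp hf⟩, by simp [Pi.smul_apply, hf0]⟩

/-- The space `Lip₀(M)` of Lipschitz functions vanishing at the base point.
(A type synonym, so that it carries the Lipschitz-norm topology rather than the
topology of pointwise convergence.) -/
def Lip0 (M : Type*) [MetricSpace M] (base : M) : Type _ := ↥(Lip0Sub M base)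

variable {M : Type*} [MetricSpace M] {base : M}

instance : AddCommGroup (Lip0 M base) :=
  inferInstanceAs (AddCommGroup ↥(Lip0Sub M base))

noncomputable instance : Module ℝ (Lip0 M base) :=
  inferInstanceAs (Module ℝ ↥(Lip0Sub M base))

/-- An element of `Lip₀(M)` is a function on `M`. -/
instance : CoeFun (Lip0 M base) (fun _ => M → ℝ) :=
  ⟨fun f => (Subtype.val f : M → ℝ)⟩

theorem Lip0.prop (f : Lip0 M base) :
    (∃ K, LipschitzWith K (f : M → ℝ)) ∧ (f : M → ℝ) base = 0 :=
  Subtype.prop f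

/-- The quantity defining the Lipschitz norm. -/
noncomputable def Lip0.lipNorm (f : Lip0 M base) : ℝ :=
  ⨆ p : M × M, |f p.1 - f p.2| / dist p.1 p.2

theorem Lip0.ratio_le (f : Lip0 M base) {K : ℝ≥0} (hK : LipschitzWith K (f : M → ℝ))
    (p : M × M) : |f p.1 - f p.2| / dist p.1 p.2 ≤ K := by
  rcases eq_or_ne p.1 p.2 with h | h
  · simp [h, K.coe_nonneg]
  · rw [div_le_iff₀ (dist_pos.2 h)]
    simpa [Real.dist_eq] using hK.dist_le_mul p.1 p.2

theorem Lip0.bddAbove (f : Lip0 M base) :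
    BddAbove (Set.range fun p : M × M => |f p.1 - f p.2| / dist p.1 p.2) := by
  obtain ⟨K, hK⟩ := f.prop.1
  exact ⟨K, by rintro r ⟨p, rfl⟩; exact f.ratio_le hK p⟩

theorem Lip0.ratio_le_lipNorm (f : Lip0 M base) (p : M × M) :
    |f p.1 - f p.2| / dist p.1 p.2 ≤ f.lipNorm :=
  le_ciSup f.bddAbove p

theorem Lip0.lipNorm_nonneg (f : Lip0 M base) : 0 ≤ f.lipNorm := by
  have := f.ratio_le_lipNorm (base, base)
  simpa using this

/-- The Lipschitz norm on `Lip₀(M)`: the best Lipschitz constant,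
`‖f‖ = sup_{x ≠ y} |f x - f y| / d(x,y)`. -/
noncomputable instance Lip0.normedAddCommGroup :
    NormedAddCommGroup (Lip0 M base) :=
  AddGroupNorm.toNormedAddCommGroup
    { toFun := fun f => f.lipNorm
      map_zero' := by
        have h : ∀ p : M × M,
            |(0 : Lip0 M base) p.1 - (0 : Lip0 M base) p.2| / dist p.1 p.2 = 0 := by
          intro p
          show |(0:ℝ) - 0| / _ = 0
          simp
        haveI : Nonempty (M × M) := ⟨(base, base)⟩
        simp only [Lip0.lipNorm, h, ciSup_const]
      add_le' := by
        intro f g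
        haveI : Nonempty (M × M) := ⟨(base, base)⟩
        apply ciSup_le
        intro p
        rcases eq_or_ne p.1 p.2 with h | h
        · have : dist p.1 p.2 = 0 := by simp [h]
          rw [this, div_zero]
          exact add_nonneg f.lipNorm_nonneg g.lipNorm_nonneg
        · have hd : (0:ℝ) < dist p.1 p.2 := dist_pos.2 h
          have h1 : |(f + g) p.1 - (f + g) p.2| ≤ |f p.1 - f p.2| + |g p.1 - g p.2| := by
            show |(f p.1 + g p.1) - (f p.2 + g p.2)| ≤ _
            rw [add_sub_add_comm]
            exact abs_add_le _ _
          calc |(f + g) p.1 - (f + g) p.2| / dist p.1 p.2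
              ≤ (|f p.1 - f p.2| + |g p.1 - g p.2|) / dist p.1 p.2 := by gcongr
            _ ≤ f.lipNorm + g.lipNorm := by
                rw [add_div]
                exact add_le_add (f.ratio_le_lipNorm p) (g.ratio_le_lipNorm p)
      neg' := by
        intro f
        show Lip0.lipNorm _ = Lip0.lipNorm _
        unfold Lip0.lipNorm
        congr 1
        funext p
        show |(- f p.1) - (- f p.2)| / _ = _
        rw [neg_sub_neg, abs_sub_comm]
      eq_zero_of_map_eq_zero' := by
        intro f hf
        have hconst : ∀ x y : M, f x = f y := by
          intro x y
          rcases eq_or_ne x y with h | h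
          · rw [h]
          · have h1 : |f x - f y| / dist x y ≤ 0 := hf ▸ f.ratio_le_lipNorm (x, y)
            have h2 : (0:ℝ) ≤ |f x - f y| / dist x y :=
              div_nonneg (abs_nonneg _) dist_nonneg
            rcases div_eq_zero_iff.1 (le_antisymm h1 h2) with h3 | h3
            · exact sub_eq_zero.1 (abs_eq_zero.1 h3)
            · exact absurd h3 (dist_ne_zero.2 h)
        have hzero : ∀ x, f x = 0 := fun x => (hconst x base).trans f.prop.2
        exact Subtype.ext (funext hzero) }

noncomputable instance Lip0.normedSpace : NormedSpace ℝ (Lip0 M base) :=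
  { norm_smul_le := by
      intro c f
      haveI : Nonempty (M × M) := ⟨(base, base)⟩
      apply ciSup_le
      intro p
      have heq : |(c • f) p.1 - (c • f) p.2| / dist p.1 p.2
          = |c| * (|f p.1 - f p.2| / dist p.1 p.2) := by
        show |c * f p.1 - c * f p.2| / dist p.1 p.2 = _
        rw [← mul_sub, abs_mul, mul_div_assoc]
      rw [heq]
      calc |c| * (|f p.1 - f p.2| / dist p.1 p.2)
          ≤ |c| * f.lipNorm :=
            mul_le_mul_of_nonneg_left (f.ratio_le_lipNorm p) (abs_nonneg c)
        _ = ‖c‖ * ‖f‖ := rfl }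

/-- Evaluation functional `δ(x) ∈ Lip₀(M)*`. -/
noncomputable def deltaF (base : M) (x : M) : StrongDual ℝ (Lip0 M base) :=
  LinearMap.mkContinuous
    { toFun := fun f => f x
      map_add' := fun _ _ => rfl
      map_smul' := fun _ _ => rfl }
    (dist x base)
    (by
      intro f
      show |f x| ≤ dist x base * ‖f‖
      rcases eq_or_ne x base with h | h
      · simp [h, f.prop.2, mul_nonneg dist_nonneg f.lipNorm_nonneg]
      · have h1 : |f x - f base| / dist x base ≤ ‖f‖ := f.ratio_le_lipNorm (x, base)
        have h2 : |f x - f base| ≤ dist x base * ‖f‖ := by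
          rw [div_le_iff₀ (dist_pos.2 (by simpa using h))] at h1
          linarith [h1]
        simpa [f.prop.2] using h2)

/-- The Lipschitz-free space `F(M)`, realized as the closed linear span of the
evaluation functionals inside `Lip₀(M)*`. -/
noncomputable def FreeSpace (base : M) : Set (StrongDual ℝ (Lip0 M base)) :=
  closure ((Submodule.span ℝ (Set.range (deltaF base)) :
    Submodule ℝ (StrongDual ℝ (Lip0 M base))) : Set (StrongDual ℝ (Lip0 M base)))

/-- A functional `φ ∈ Lip₀(M)* = F(M)**` is *normal* if for every norm-bounded net
converging pointwise and monotonically to `f ∈ Lip₀(M)`, the values `φ(fᵢ)` converge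
to `φ(f)`. -/
def IsNormal (base : M) (φ : StrongDual ℝ (Lip0 M base)) : Prop :=
  ∀ (ι : Type) [Preorder ι] [Nonempty ι] [IsDirected ι (· ≤ ·)]
    (F : ι → Lip0 M base) (f : Lip0 M base) (C : ℝ),
    (∀ i, ‖F i‖ ≤ C) →
    ((∀ x, Monotone fun i => (F i) x) ∨ (∀ x, Antitone fun i => (F i) x)) →
    (∀ x, Tendsto (fun i => (F i) x) atTop (𝓝 (f x))) →
    Tendsto (fun i => φ (F i)) atTop (𝓝 (φ f))



variable {M : Type*} [MetricSpace M]

/-- The "tent" function `Λ_n`, supported on the annulus `2^(n-1) < d(x,0) < 2^(n+1)`,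
equal to `1` on the sphere `d(x,0) = 2^n` and affine in `d(x,0)` in between. -/
noncomputable def Lam (base : M) (n : ℤ) (x : M) : ℝ :=
  max 0 (min ((2:ℝ) ^ (1 - n) * dist x base - 1) (2 - (2:ℝ) ^ (-n) * dist x base))

/-- The "plateau" function `Π_n`, equal to `1` on the annulus `2^(-n) ≤ d(x,0) ≤ 2^n`,
vanishing for `d(x,0) ≤ 2^(-(n+1))` and `d(x,0) ≥ 2^(n+1)`, affine in between. -/
noncomputable def Pla (base : M) (n : ℕ) (x : M) : ℝ :=
  max 0 (min 1 (min ((2:ℝ) ^ ((n:ℤ) + 1) * dist x base - 1)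
    (2 - (2:ℝ) ^ (-(n:ℤ)) * dist x base)))

/-- The cutoff function `h_n`, equal to `1` on the ball `d(x,0) ≤ 2^n`, vanishing for
`d(x,0) ≥ 2^(n+1)`, and affine in `d(x,0)` in between. -/
noncomputable def hfun (base : M) (n : ℤ) (x : M) : ℝ :=
  max 0 (min 1 (2 - (2:ℝ) ^ (-n) * dist x base))

namespace Lip0

variable {M : Type*} [MetricSpace M] {base : M}

@[ext] lemma ext {f g : Lip0 M base} (h : ∀ x, f x = g x) : f = g :=
  Subtype.ext (funext h)

@[simp] lemma sub_apply (f g : Lip0 M base) (x : M) : (f - g) x = f x - g x := rfl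
@[simp] lemma neg_apply (f : Lip0 M base) (x : M) : (-f) x = -f x := rfl
@[simp] lemma smul_apply (c : ℝ) (f : Lip0 M base) (x : M) : (c • f) x = c * f x := rfl

lemma sum_apply {ι : Type*} (s : Finset ι) (f : ι → Lip0 M base) (x : M) :
    (∑ i ∈ s, f i) x = ∑ i ∈ s, f i x :=
  map_sum (deltaF base x) f s

lemma abs_sub_le (f : Lip0 M base) (x y : M) : |f x - f y| ≤ ‖f‖ * dist x y := by
  rcases eq_or_ne x y with rfl | hxy
  · simp
  · have := f.ratio_le_lipNorm (x, y)
    rwa [div_le_iff₀ (dist_pos.2 hxy)] at this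

lemma abs_apply_le (f : Lip0 M base) (x : M) : |f x| ≤ ‖f‖ * dist x base := by
  simpa [f.prop.2] using f.abs_sub_le x base

lemma norm_le_of_abs_sub_le {f : Lip0 M base} {K : ℝ} (hK : 0 ≤ K)
    (h : ∀ x y, |f x - f y| ≤ K * dist x y) : ‖f‖ ≤ K := by
  have : Nonempty (M × M) := ⟨(base, base)⟩
  refine ciSup_le fun p => ?_
  rcases eq_or_ne p.1 p.2 with hp | hp
  · simp [hp, hK]
  · rw [div_le_iff₀ (dist_pos.2 hp)]
    exact h p.1 p.2

noncomputable def ofBound (F : M → ℝ) (K : ℝ) (hF : ∀ x y, |F x - F y| ≤ K * dist x y)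
    (h0 : F base = 0) : Lip0 M base :=
  ⟨F, ⟨⟨⟨max K 0, le_max_right _ _⟩, LipschitzWith.of_dist_le_mul fun x y =>
      (hF x y).trans (mul_le_mul_of_nonneg_right (le_max_left _ _) dist_nonneg)⟩, h0⟩⟩

lemma norm_ofBound_le {F : M → ℝ} {K : ℝ} (hK : 0 ≤ K) (hF) (h0 : F base = 0) :
    ‖ofBound F K hF h0‖ ≤ K :=
  norm_le_of_abs_sub_le hK hF

noncomputable def posPart (g : Lip0 M base) : Lip0 M base :=
  ofBound (fun x => max (g x) 0) ‖g‖
    (fun x y => (abs_max_sub_max_le_abs _ _ _).trans (g.abs_sub_le x y)) (by simp [g.prop.2])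

@[simp] lemma posPart_apply (g : Lip0 M base) (x : M) : g.posPart x = max (g x) 0 := rfl

lemma norm_posPart_le (g : Lip0 M base) : ‖g.posPart‖ ≤ ‖g‖ :=
  norm_ofBound_le (norm_nonneg g) _ _

lemma posPart_sub_posPart_neg (g : Lip0 M base) : g.posPart - (-g).posPart = g := by
  ext x
  simp [max_zero_sub_max_neg_zero_eq_self]

/-- The sum is pointwise a single `w k`, and the other summands are nonnegative, so the bound
for `w k` carries over. -/
lemma norm_sum_le_of_disjoint {ι : Type*} (s : Finset ι) (w : ι → Lip0 M base) {C : ℝ}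
    (hC0 : 0 ≤ C) (hC : ∀ k, ‖w k‖ ≤ C) (hw : ∀ k x, 0 ≤ w k x)
    (hdisj : Pairwise fun k l => ∀ x, w k x = 0 ∨ w l x = 0) :
    ‖∑ k ∈ s, w k‖ ≤ C := by
  have key : ∀ x y, (∑ k ∈ s, w k x) - ∑ k ∈ s, w k y ≤ C * dist x y := by
    intro x y
    by_cases hx : ∃ k ∈ s, w k x ≠ 0
    · obtain ⟨k, hks, hk⟩ := hx
      have hsx : ∑ l ∈ s, w l x = w k x := Finset.sum_eq_single_of_mem k hks
        fun l _ hlk => (hdisj hlk x).resolve_right hk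
      have hsy : w k y ≤ ∑ l ∈ s, w l y :=
        Finset.single_le_sum (fun l _ => hw l y) hks
      calc (∑ l ∈ s, w l x) - ∑ l ∈ s, w l y ≤ w k x - w k y := by linarith
        _ ≤ |w k x - w k y| := le_abs_self _
        _ ≤ ‖w k‖ * dist x y := (w k).abs_sub_le x y
        _ ≤ C * dist x y := by gcongr; exact hC k
    · push Not at hx
      rw [Finset.sum_eq_zero hx, zero_sub]
      exact (neg_nonpos.2 (Finset.sum_nonneg fun l _ => hw l y)).trans (by positivity)
  refine norm_le_of_abs_sub_le hC0 fun x y => ?_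
  rw [sum_apply, sum_apply, abs_sub_le_iff]
  exact ⟨key x y, dist_comm x y ▸ key y x⟩

lemma exists_tendsto_of_monotone (F : ℕ → Lip0 M base) {C : ℝ} (hC : ∀ k, ‖F k‖ ≤ C)
    (hF : ∀ x, Monotone fun k => F k x) :
    ∃ f : Lip0 M base, ∀ x, Tendsto (fun k => F k x) atTop (𝓝 (f x)) := by
  have hbdd : ∀ x, BddAbove (Set.range fun k => F k x) := fun x =>
    ⟨C * dist x base, by
      rintro _ ⟨k, rfl⟩
      exact (le_abs_self _).trans ((F k).abs_apply_le x |>.trans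
        (mul_le_mul_of_nonneg_right (hC k) dist_nonneg))⟩
  have hlim : ∀ x, Tendsto (fun k => F k x) atTop (𝓝 (⨆ k, F k x)) := fun x =>
    tendsto_atTop_ciSup (hF x) (hbdd x)
  refine ⟨ofBound (fun x => ⨆ k, F k x) C (fun x y => ?_) (by simp [(F _).prop.2]), hlim⟩
  exact le_of_tendsto' ((hlim x).sub (hlim y)).abs fun k =>
    ((F k).abs_sub_le x y).trans (mul_le_mul_of_nonneg_right (hC k) dist_nonneg)

end Lip0

/-- The bound that makes `x ↦ γ (d(x, base))` a multiplier of `Lip₀(M)`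
(`Lip0.abs_mul_radial_sub_le`): the factor `s` pays for `|f y| ≤ ‖f‖ d(y, base)`. -/
def OscBound (c : ℝ) (γ : ℝ → ℝ) : Prop :=
  ∀ ⦃s t : ℝ⦄, 0 ≤ s → s ≤ t → |γ t - γ s| * s ≤ c * (t - s)

namespace OscBound

variable {c : ℝ} {γ : ℝ → ℝ}

lemma nonneg (h : OscBound c γ) : 0 ≤ c := by
  simpa using h le_rfl zero_le_one

lemma sub_const (h : OscBound c γ) (a : ℝ) : OscBound c fun u => γ u - a := fun s t hs hst => by
  simpa only [sub_sub_sub_cancel_right] using h hs hst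

protected lemma min {γ' : ℝ → ℝ} (h : OscBound c γ) (h' : OscBound c γ') :
    OscBound c fun u => min (γ u) (γ' u) := fun s t hs hst =>
  calc |min (γ t) (γ' t) - min (γ s) (γ' s)| * s ≤ max |γ t - γ s| |γ' t - γ' s| * s := by
        gcongr; exact abs_min_sub_min_le_max _ _ _ _
    _ = max (|γ t - γ s| * s) (|γ' t - γ' s| * s) := max_mul_of_nonneg _ _ hs
    _ ≤ c * (t - s) := max_le (h hs hst) (h' hs hst)

lemma of_lipschitz {L q : ℝ} (hq : 0 ≤ q) (hL : ∀ s t, s ≤ t → |γ t - γ s| ≤ L * (t - s))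
    (hconst : ∀ t, q ≤ t → γ t = γ q) : OscBound (L * q) γ := by
  intro s t hs hst
  have hLst : 0 ≤ L * (t - s) := (abs_nonneg _).trans (hL s t hst)
  rcases lt_or_ge s q with hsq | hqs
  · calc |γ t - γ s| * s ≤ L * (t - s) * q := by gcongr; exact hL s t hst
      _ = L * q * (t - s) := by ring
  · rw [hconst t (hqs.trans hst), hconst s hqs, sub_self, abs_zero, zero_mul]
    nlinarith

end OscBound

namespace Lip0

variable {M : Type*} [MetricSpace M] {base : M}

lemma abs_mul_radial_sub_le (f : Lip0 M base) {γ : ℝ → ℝ} {c : ℝ}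
    (hγ : ∀ u, |γ u| ≤ 1) (hosc : OscBound c γ) (x y : M) :
    |f x * γ (dist x base) - f y * γ (dist y base)| ≤ (1 + c) * ‖f‖ * dist x y := by
  wlog hyx : dist y base ≤ dist x base generalizing x y
  · rw [abs_sub_comm, dist_comm x y]
    exact this y x (le_of_not_ge hyx)
  have hc := hosc.nonneg
  set δ := |γ (dist x base) - γ (dist y base)|
  have hfirst : |γ (dist x base) * (f x - f y)| ≤ ‖f‖ * dist x y := by
    rw [abs_mul]
    exact (mul_le_of_le_one_left (abs_nonneg _) (hγ _)).trans (f.abs_sub_le x y)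
  have hsecond : |f y * (γ (dist x base) - γ (dist y base))| ≤ c * ‖f‖ * dist x y := by
    rw [abs_mul]
    calc |f y| * δ ≤ ‖f‖ * dist y base * δ := by gcongr; exact f.abs_apply_le y
      _ = ‖f‖ * (δ * dist y base) := by ring
      _ ≤ ‖f‖ * (c * (dist x base - dist y base)) :=
          mul_le_mul_of_nonneg_left (hosc dist_nonneg hyx) (norm_nonneg f)
      _ ≤ ‖f‖ * (c * dist x y) := by gcongr; linarith [dist_triangle x y base]
      _ = c * ‖f‖ * dist x y := by ring
  calc |f x * γ (dist x base) - f y * γ (dist y base)|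
      = |γ (dist x base) * (f x - f y) + f y * (γ (dist x base) - γ (dist y base))| := by
        ring_nf
    _ ≤ ‖f‖ * dist x y + c * ‖f‖ * dist x y := (abs_add_le _ _).trans (add_le_add hfirst hsecond)
    _ = (1 + c) * ‖f‖ * dist x y := by ring

lemma norm_le_of_apply_eq_mul_radial {f g : Lip0 M base} {γ : ℝ → ℝ} {c : ℝ}
    (hγ : ∀ u, |γ u| ≤ 1) (hosc : OscBound c γ)
    (hg : ∀ x, g x = f x * γ (dist x base)) : ‖g‖ ≤ (1 + c) * ‖f‖ := by
  have := hosc.nonneg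
  refine norm_le_of_abs_sub_le (by positivity) fun x y => ?_
  rw [hg, hg]
  exact f.abs_mul_radial_sub_le hγ hosc x y

end Lip0

lemma two_zpow_le_two_zpow_mul {a b : ℤ} {u : ℝ} (h : (2:ℝ) ^ b ≤ u) :
    (2:ℝ) ^ (a + b) ≤ 2 ^ a * u := by
  rw [zpow_add₀ two_ne_zero]; gcongr

lemma two_zpow_mul_le_two_zpow {a b : ℤ} {u : ℝ} (h : u ≤ (2:ℝ) ^ b) :
    (2:ℝ) ^ a * u ≤ 2 ^ (a + b) := by
  rw [zpow_add₀ two_ne_zero]; gcongr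

lemma abs_clamp_sub_clamp_le (v w : ℝ) :
    |max 0 (min 1 v) - max 0 (min 1 w)| ≤ |v - w| := by
  rw [max_comm 0, max_comm 0]
  exact (abs_max_sub_max_le_abs _ _ _).trans
    ((abs_min_sub_min_le_max _ _ _ _).trans (by simp))

lemma clamp_eq_one {v : ℝ} (h : 1 ≤ v) : max 0 (min 1 v) = 1 := by simp [h]

lemma clamp_eq_zero {v : ℝ} (h : v ≤ 0) : max 0 (min 1 v) = 0 :=
  max_eq_left (min_le_of_right_le h)

lemma oscBound_clamp_affine {α β q c : ℝ} (hq : 0 ≤ q) (hc : |α| * q = c)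
    (hconst : ∀ t, q ≤ t → max 0 (min 1 (α * t + β)) = max 0 (min 1 (α * q + β))) :
    OscBound c fun u => max 0 (min 1 (α * u + β)) := by
  rw [← hc]
  refine OscBound.of_lipschitz hq (fun s t hst => ?_) hconst
  calc _ ≤ |α * t + β - (α * s + β)| := abs_clamp_sub_clamp_le _ _
    _ = |α| * (t - s) := by rw [← abs_of_nonneg (sub_nonneg.2 hst), ← abs_mul]; ring_nf

noncomputable def lamProfile (j : ℤ) (u : ℝ) : ℝ :=
  max 0 (min ((2:ℝ) ^ (1 - j) * u - 1) (2 - (2:ℝ) ^ (-j) * u))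

noncomputable def plaProfile (n : ℕ) (u : ℝ) : ℝ :=
  max 0 (min 1 (min ((2:ℝ) ^ ((n:ℤ) + 1) * u - 1) (2 - (2:ℝ) ^ (-(n:ℤ)) * u)))

lemma Lam_eq_lamProfile {M : Type*} [MetricSpace M] (base : M) (j : ℤ) (x : M) :
    Lam base j x = lamProfile j (dist x base) := rfl

lemma Pla_eq_plaProfile {M : Type*} [MetricSpace M] (base : M) (n : ℕ) (x : M) :
    Pla base n x = plaProfile n (dist x base) := rfl

lemma plaProfile_mem_Icc (n : ℕ) (u : ℝ) : plaProfile n u ∈ Set.Icc 0 1 :=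
  ⟨le_max_left _ _, max_le zero_le_one (min_le_left _ _)⟩

lemma plaProfile_eq_one {n : ℕ} {u : ℝ} (h1 : (2:ℝ) ^ (-(n:ℤ)) ≤ u)
    (h2 : u ≤ (2:ℝ) ^ (n:ℤ)) : plaProfile n u = 1 := by
  have hup : 2 ≤ (2:ℝ) ^ ((n:ℤ) + 1) * u := by
    simpa using two_zpow_le_two_zpow_mul (a := (n:ℤ) + 1) h1
  have hdown : (2:ℝ) ^ (-(n:ℤ)) * u ≤ 1 := by
    simpa using two_zpow_mul_le_two_zpow (a := -(n:ℤ)) h2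
  exact clamp_eq_one (le_min (by linarith) (by linarith))

lemma plaProfile_eq_zero_of_le {n : ℕ} {u : ℝ} (h : u ≤ (2:ℝ) ^ (-((n:ℤ) + 1))) :
    plaProfile n u = 0 := by
  have : (2:ℝ) ^ ((n:ℤ) + 1) * u ≤ 1 := by
    simpa using two_zpow_mul_le_two_zpow (a := (n:ℤ) + 1) h
  exact max_eq_left (min_le_of_right_le (min_le_of_left_le (by linarith)))

lemma plaProfile_eq_zero_of_ge {n : ℕ} {u : ℝ} (h : (2:ℝ) ^ ((n:ℤ) + 1) ≤ u) :
    plaProfile n u = 0 := by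
  have : 2 ≤ (2:ℝ) ^ (-(n:ℤ)) * u := by
    simpa using two_zpow_le_two_zpow_mul (a := -(n:ℤ)) h
  exact max_eq_left (min_le_of_right_le (min_le_of_right_le (by linarith)))

lemma monotone_plaProfile {u : ℝ} (hu : 0 ≤ u) : Monotone fun n : ℕ => plaProfile n u := by
  refine monotone_nat_of_le_succ fun n => ?_
  have hup : (2:ℝ) ^ ((n:ℤ) + 1) ≤ 2 ^ (((n + 1 : ℕ) : ℤ) + 1) :=
    zpow_le_zpow_right₀ one_le_two (by push_cast; omega)
  have hdown : (2:ℝ) ^ (-((n + 1 : ℕ) : ℤ)) ≤ 2 ^ (-(n:ℤ)) :=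
    zpow_le_zpow_right₀ one_le_two (by push_cast; omega)
  unfold plaProfile
  gcongr

lemma plaProfile_eq_min_clamp (n : ℕ) :
    plaProfile n = fun u => min (max 0 (min 1 ((2:ℝ) ^ ((n:ℤ) + 1) * u + -1)))
      (max 0 (min 1 (-(2:ℝ) ^ (-(n:ℤ)) * u + 2))) := by
  have hclamp : Monotone fun v : ℝ => max 0 (min 1 v) :=
    monotone_const.max (monotone_const.min monotone_id)
  funext u
  rw [plaProfile, ← hclamp.map_min]
  ring_nf

lemma oscBound_plaProfile (n : ℕ) : OscBound 2 (plaProfile n) := by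
  have hpos : (0:ℝ) < 2 ^ (-(n:ℤ)) := zpow_pos two_pos _
  rw [plaProfile_eq_min_clamp]
  refine OscBound.min (oscBound_clamp_affine (q := 2 ^ (-(n:ℤ))) hpos.le ?_ fun t ht => ?_)
    (oscBound_clamp_affine (q := 2 ^ ((n:ℤ) + 1)) (zpow_pos two_pos _).le ?_ fun t ht => ?_)
  · rw [abs_of_pos (zpow_pos two_pos _), ← zpow_add₀ two_ne_zero]; simp
  · have := two_zpow_le_two_zpow_mul (a := (n:ℤ) + 1) ht
    simp only [add_neg_cancel_comm, zpow_one] at this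
    rw [clamp_eq_one (by linarith), clamp_eq_one (by rw [← zpow_add₀ two_ne_zero]; norm_num)]
  · rw [abs_neg, abs_of_pos hpos, ← zpow_add₀ two_ne_zero]; simp
  · have := two_zpow_le_two_zpow_mul (a := -(n:ℤ)) ht
    simp only [neg_add_cancel_left, zpow_one] at this
    rw [clamp_eq_zero (by linarith),
      clamp_eq_zero (by rw [neg_mul, ← zpow_add₀ two_ne_zero]; norm_num)]

lemma lamProfile_nonneg (j : ℤ) (u : ℝ) : 0 ≤ lamProfile j u := le_max_left _ _

lemma lamProfile_eq_zero_of_le {j : ℤ} {u : ℝ} (h : u ≤ (2:ℝ) ^ (j - 1)) :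
    lamProfile j u = 0 := by
  have : (2:ℝ) ^ (1 - j) * u ≤ 1 := by simpa using two_zpow_mul_le_two_zpow (a := 1 - j) h
  exact max_eq_left (min_le_of_left_le (by linarith))

lemma lamProfile_eq_zero_of_ge {j : ℤ} {u : ℝ} (h : (2:ℝ) ^ (j + 1) ≤ u) :
    lamProfile j u = 0 := by
  have : 2 ≤ (2:ℝ) ^ (-j) * u := by simpa using two_zpow_le_two_zpow_mul (a := -j) h
  exact max_eq_left (min_le_of_right_le (by linarith))

lemma lamProfile_add_lamProfile_succ {k : ℤ} {u : ℝ} (h1 : (2:ℝ) ^ k ≤ u)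
    (h2 : u ≤ (2:ℝ) ^ (k + 1)) : lamProfile k u + lamProfile (k + 1) u = 1 := by
  have hk : (2:ℝ) ^ (1 - k) * u = 2 * ((2:ℝ) ^ (-k) * u) := by
    rw [show 1 - k = 1 + -k by ring, zpow_add₀ two_ne_zero, zpow_one, mul_assoc]
  have hk' : (2:ℝ) ^ (-(k + 1)) * u = (2:ℝ) ^ (-k) * u / 2 := by
    rw [show -(k + 1) = -k + -1 by ring, zpow_add₀ two_ne_zero]; ring_nf
  have hlow : 1 ≤ (2:ℝ) ^ (-k) * u := by simpa using two_zpow_le_two_zpow_mul (a := -k) h1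
  have hhigh : (2:ℝ) ^ (-k) * u ≤ 2 := by simpa using two_zpow_mul_le_two_zpow (a := -k) h2
  rw [lamProfile, lamProfile, hk, show 1 - (k + 1) = -k by ring, hk',
    min_eq_right (by linarith), min_eq_left (by linarith), max_eq_right (by linarith),
    max_eq_right (by linarith)]
  ring

lemma abs_lamProfile_sub_le (j : ℤ) {s t : ℝ} (hst : s ≤ t) :
    |lamProfile j t - lamProfile j s| ≤ (2:ℝ) ^ (1 - j) * (t - s) := by
  have hslope : (2:ℝ) ^ (-j) ≤ 2 ^ (1 - j) := zpow_le_zpow_right₀ one_le_two (by omega)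
  have hts : 0 ≤ t - s := sub_nonneg.2 hst
  rw [lamProfile, lamProfile, max_comm 0, max_comm 0]
  refine (abs_max_sub_max_le_abs _ _ _).trans ((abs_min_sub_min_le_max _ _ _ _).trans ?_)
  rw [show (2:ℝ) ^ (1 - j) * t - 1 - (2 ^ (1 - j) * s - 1) = 2 ^ (1 - j) * (t - s) by ring,
    show 2 - (2:ℝ) ^ (-j) * t - (2 - 2 ^ (-j) * s) = -(2 ^ (-j) * (t - s)) by ring, abs_neg,
    abs_of_nonneg (by positivity), abs_of_nonneg (by positivity)]
  exact max_le le_rfl (by gcongr)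

lemma exists_two_zpow_le_lt {u : ℝ} (hu : 0 < u) :
    ∃ k : ℤ, (2:ℝ) ^ k ≤ u ∧ u < (2:ℝ) ^ (k + 1) :=
  ⟨Int.log 2 u, by simpa using Int.zpow_log_le_self (b := 2) one_lt_two hu,
    by simpa using Int.lt_zpow_succ_log_self (b := 2) one_lt_two u⟩

lemma sum_lamProfile_eq_sum_inter (S : Finset ℤ) {k : ℤ} {u : ℝ} (h1 : (2:ℝ) ^ k ≤ u)
    (h2 : u ≤ (2:ℝ) ^ (k + 1)) :
    ∑ j ∈ S, lamProfile j u = ∑ j ∈ S ∩ {k, k + 1}, lamProfile j u := by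
  refine (Finset.sum_subset Finset.inter_subset_left fun j hjS hj => ?_).symm
  have hj' : j ≠ k ∧ j ≠ k + 1 := by simpa [hjS] using hj
  rcases lt_or_gt_of_ne hj'.1 with hjk | hjk
  · exact lamProfile_eq_zero_of_ge
      ((zpow_le_zpow_right₀ one_le_two (by omega)).trans h1)
  · exact lamProfile_eq_zero_of_le
      (h2.trans (zpow_le_zpow_right₀ one_le_two (by omega)))

lemma sum_lamProfile_mem_Icc (S : Finset ℤ) (u : ℝ) :
    ∑ j ∈ S, lamProfile j u ∈ Set.Icc 0 1 := by
  refine ⟨Finset.sum_nonneg fun j _ => lamProfile_nonneg j u, ?_⟩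
  rcases le_or_gt u 0 with hu | hu
  · rw [Finset.sum_eq_zero fun j _ =>
      lamProfile_eq_zero_of_le (hu.trans (zpow_pos two_pos _).le)]
    exact zero_le_one
  obtain ⟨k, hk1, hk2⟩ := exists_two_zpow_le_lt hu
  rw [sum_lamProfile_eq_sum_inter S hk1 hk2.le, ← lamProfile_add_lamProfile_succ hk1 hk2.le,
    ← Finset.sum_pair (f := fun j => lamProfile j u) (by omega : k ≠ k + 1)]
  exact Finset.sum_le_sum_of_subset_of_nonneg Finset.inter_subset_right
    fun j _ _ => lamProfile_nonneg j u

lemma sum_lamProfile_eq_one {S : Finset ℤ} {N : ℕ} (hS : Finset.Icc (-(N:ℤ)) (N + 1) ⊆ S)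
    {u : ℝ} (h1 : (2:ℝ) ^ (-(N:ℤ)) ≤ u) (h2 : u ≤ (2:ℝ) ^ (N:ℤ)) :
    ∑ j ∈ S, lamProfile j u = 1 := by
  obtain ⟨k, hk1, hk2⟩ := exists_two_zpow_le_lt ((zpow_pos two_pos _).trans_le h1)
  have hkN : k ≤ N := (zpow_le_zpow_iff_right₀ one_lt_two).1 (hk1.trans h2)
  have hNk : -(N:ℤ) < k + 1 := (zpow_lt_zpow_iff_right₀ one_lt_two).1 (h1.trans_lt hk2)
  have hpair : S ∩ {k, k + 1} = {k, k + 1} := Finset.inter_eq_right.2 fun j hj => hS (by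
    rcases Finset.mem_insert.1 hj with rfl | hj
    · exact Finset.mem_Icc.2 ⟨by omega, by omega⟩
    · rw [Finset.mem_singleton.1 hj]; exact Finset.mem_Icc.2 ⟨by omega, by omega⟩)
  rw [sum_lamProfile_eq_sum_inter S hk1 hk2.le, hpair, Finset.sum_pair (by omega),
    lamProfile_add_lamProfile_succ hk1 hk2.le]

lemma sum_two_zpow_sub_le (T : Finset ℤ) {L : ℤ} (hT : ∀ j ∈ T, L ≤ j) :
    ∑ j ∈ T, (2:ℝ) ^ (L - j) ≤ 2 := by
  have hinj : Set.InjOn (fun j => (j - L).toNat) T := fun i hi j hj hij => by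
    have := hT i hi; have := hT j hj; simp only at hij; omega
  calc ∑ j ∈ T, (2:ℝ) ^ (L - j) = ∑ j ∈ T, (1 / 2 : ℝ) ^ (j - L).toNat :=
        Finset.sum_congr rfl fun j hj => by
          rw [one_div, inv_pow, ← zpow_natCast, ← zpow_neg, Int.toNat_of_nonneg
            (sub_nonneg.2 (hT j hj)), neg_sub]
    _ = ∑ i ∈ T.image fun j => (j - L).toNat, (1 / 2 : ℝ) ^ i := (Finset.sum_image hinj).symm
    _ ≤ ∑' i : ℕ, (1 / 2 : ℝ) ^ i :=
        summable_geometric_two.sum_le_tsum _ fun i _ => by positivity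
    _ = 2 := tsum_geometric_two

/-- Tents with `2^(j+1) ≤ s` vanish on `[s, t]`; the slopes `2^(1-j)` of the others, `2^j > s/2`,
sum to at most `8 / s`. -/
lemma oscBound_sum_lamProfile (S : Finset ℤ) :
    OscBound 8 fun u => ∑ j ∈ S, lamProfile j u := by
  intro s t hs hst
  have hts : 0 ≤ t - s := sub_nonneg.2 hst
  rcases hs.eq_or_lt with rfl | hs
  · simpa using hts
  obtain ⟨L, hL1, hL2⟩ := exists_two_zpow_le_lt hs
  set T := S.filter fun j => L ≤ j
  have hsum : ∑ j ∈ S, lamProfile j t - ∑ j ∈ S, lamProfile j s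
      = ∑ j ∈ T, (lamProfile j t - lamProfile j s) := by
    rw [← Finset.sum_sub_distrib]
    refine (Finset.sum_subset (Finset.filter_subset _ _) fun j hjS hjT => ?_).symm
    have hjL : j + 1 ≤ L := by simp only [Finset.mem_filter, hjS, true_and, not_le] at hjT; omega
    have hj : (2:ℝ) ^ (j + 1) ≤ s := (zpow_le_zpow_right₀ one_le_two hjL).trans hL1
    rw [lamProfile_eq_zero_of_ge hj, lamProfile_eq_zero_of_ge (hj.trans hst), sub_self]
  have hterm : ∀ j ∈ T, |lamProfile j t - lamProfile j s| * s ≤ 4 * 2 ^ (L - j) * (t - s) := by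
    intro j _
    calc |lamProfile j t - lamProfile j s| * s ≤ 2 ^ (1 - j) * (t - s) * 2 ^ (L + 1) := by
          gcongr; exact abs_lamProfile_sub_le j hst
      _ = 4 * 2 ^ (L - j) * (t - s) := by
          rw [mul_right_comm, ← zpow_add₀ two_ne_zero,
            show 1 - j + (L + 1) = 2 + (L - j) by ring, zpow_add₀ two_ne_zero]
          norm_num
  calc |∑ j ∈ S, lamProfile j t - ∑ j ∈ S, lamProfile j s| * s
      ≤ ∑ j ∈ T, |lamProfile j t - lamProfile j s| * s := by
        rw [hsum, ← Finset.sum_mul]; gcongr; exact Finset.abs_sum_le_sum_abs _ _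
    _ ≤ ∑ j ∈ T, 4 * 2 ^ (L - j) * (t - s) := Finset.sum_le_sum hterm
    _ = 4 * (∑ j ∈ T, (2:ℝ) ^ (L - j)) * (t - s) := by rw [Finset.mul_sum, Finset.sum_mul]
    _ ≤ 4 * 2 * (t - s) := by
        gcongr; exact sum_two_zpow_sub_le T fun j hj => (Finset.mem_filter.1 hj).2
    _ = 8 * (t - s) := by norm_num

section Normal

variable {M : Type*} [MetricSpace M] {base : M}

def dyadicAnnulus (base : M) (N : ℕ) : Set M :=
  {x | (2:ℝ) ^ (-(N:ℤ)) ≤ dist x base ∧ dist x base ≤ (2:ℝ) ^ (N:ℤ)}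

lemma dyadicAnnulus_mono : Monotone (dyadicAnnulus base) := fun N N' h _ hx =>
  ⟨(zpow_le_zpow_right₀ one_le_two (by omega)).trans hx.1,
    hx.2.trans (zpow_le_zpow_right₀ one_le_two (by omega))⟩

lemma eventually_mem_dyadicAnnulus {x : M} (hx : x ≠ base) :
    ∀ᶠ N in atTop, x ∈ dyadicAnnulus base N := by
  have h2N := tendsto_pow_atTop_atTop_of_one_lt (one_lt_two (α := ℝ))
  filter_upwards [h2N.eventually_ge_atTop (dist x base),
    (tendsto_inv_atTop_zero.comp h2N).eventually (ge_mem_nhds (dist_pos.2 hx))] with N h1 h2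
  exact ⟨by simpa using h2, by simpa using h1⟩

namespace Lip0

/-- `W_{Π_n} f`. -/
noncomputable def mulPla (n : ℕ) (f : Lip0 M base) : Lip0 M base :=
  ofBound (fun x => f x * plaProfile n (dist x base)) ((1 + 2) * ‖f‖)
    (f.abs_mul_radial_sub_le
      (fun u => (abs_of_nonneg (plaProfile_mem_Icc n u).1).trans_le (plaProfile_mem_Icc n u).2)
      (oscBound_plaProfile n)) (by simp [f.prop.2])

@[simp] lemma mulPla_apply (n : ℕ) (f : Lip0 M base) (x : M) :
    f.mulPla n x = f x * plaProfile n (dist x base) := rfl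

lemma norm_mulPla_le (n : ℕ) (f : Lip0 M base) : ‖f.mulPla n‖ ≤ 3 * ‖f‖ :=
  (norm_ofBound_le (by positivity) _ _).trans_eq (by norm_num)

end Lip0

lemma exists_nonneg_abs_apply_le (φ : StrongDual ℝ (Lip0 M base)) (g : Lip0 M base) :
    ∃ u : Lip0 M base, (∀ x, 0 ≤ u x) ∧ ‖u‖ ≤ ‖g‖ ∧ (∀ x, g x = 0 → u x = 0) ∧
      |φ g| ≤ 2 * |φ u| := by
  have h : |φ g| ≤ |φ g.posPart| + |φ (-g).posPart| :=
    calc |φ g| = |φ g.posPart - φ (-g).posPart| := by rw [← map_sub, g.posPart_sub_posPart_neg]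
      _ ≤ _ := abs_sub _ _
  rcases le_total |φ (-g).posPart| |φ g.posPart| with hle | hle
  · exact ⟨g.posPart, fun x => le_max_right _ _, g.norm_posPart_le,
      fun x hx => by simp [hx], by linarith⟩
  · exact ⟨(-g).posPart, fun x => le_max_right _ _, (-g).norm_posPart_le.trans_eq (norm_neg g),
      fun x hx => by simp [hx], by linarith⟩

namespace IsNormal

variable {φ : StrongDual ℝ (Lip0 M base)}

lemma tendsto_apply_mulPla (hφ : IsNormal base φ) {u : Lip0 M base} (hu : ∀ x, 0 ≤ u x) :
    Tendsto (fun m => φ (u.mulPla m)) atTop (𝓝 (φ u)) := by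
  refine hφ ℕ _ u (3 * ‖u‖) (fun m => u.norm_mulPla_le m)
    (Or.inl fun x m m' h => mul_le_mul_of_nonneg_left (monotone_plaProfile dist_nonneg h) (hu x))
    fun x => ?_
  rcases eq_or_ne x base with rfl | hx
  · simp [u.prop.2]
  · refine tendsto_const_nhds.congr' ?_
    filter_upwards [eventually_mem_dyadicAnnulus hx] with m hm
    simp [plaProfile_eq_one hm.1 hm.2]

lemma tendsto_zero_of_disjoint (hφ : IsNormal base φ) (w : ℕ → Lip0 M base) {C : ℝ}
    (hC : ∀ k, ‖w k‖ ≤ C) (hw : ∀ k x, 0 ≤ w k x)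
    (hdisj : Pairwise fun k l => ∀ x, w k x = 0 ∨ w l x = 0) :
    Tendsto (fun k => φ (w k)) atTop (𝓝 0) := by
  set s : ℕ → Lip0 M base := fun K => ∑ k ∈ Finset.range K, w k
  have hs : ∀ K, ‖s K‖ ≤ C := fun K =>
    Lip0.norm_sum_le_of_disjoint _ w ((norm_nonneg _).trans (hC 0)) hC hw hdisj
  have hmono : ∀ x, Monotone fun K => s K x := fun x K K' h => by
    simp only [s, Lip0.sum_apply]
    exact Finset.sum_le_sum_of_subset_of_nonneg (Finset.range_subset_range.2 h)
      fun k _ _ => hw k x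
  obtain ⟨f, hf⟩ := Lip0.exists_tendsto_of_monotone s hs hmono
  have hlim := hφ ℕ s f C hs (Or.inl hmono) hf
  have hdiff : ∀ K, φ (w K) = φ (s (K + 1)) - φ (s K) := fun K => by
    simp [s, Finset.sum_range_succ]
  simpa [hdiff] using (hlim.comp (tendsto_add_atTop_nat 1)).sub hlim

lemma exists_nonneg_bump (hφ : IsNormal base φ) {ε : ℝ} {N : ℕ} {g : Lip0 M base}
    (hgN : ∀ x ∈ dyadicAnnulus base N, g x = 0) (hg : ε * ‖g‖ < |φ g|) :
    ∃ m ≥ N, ∃ v : Lip0 M base, (∀ x, 0 ≤ v x) ∧ ‖v‖ ≤ 3 ∧ ε / 2 < |φ v| ∧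
      (∀ x ∈ dyadicAnnulus base N, v x = 0) ∧ ∀ x ∉ dyadicAnnulus base m, v x = 0 := by
  have hg0 : g ≠ 0 := by rintro rfl; simp at hg
  have hgpos : 0 < ‖g‖ := norm_pos_iff.2 hg0
  obtain ⟨u, hu0, hun, hug, huφ⟩ := exists_nonneg_abs_apply_le φ (‖g‖⁻¹ • g)
  have hun' : ‖u‖ ≤ 1 := hun.trans_eq (norm_smul_inv_norm hg0)
  have huφ' : ε / 2 < |φ u| := by
    rw [map_smul, smul_eq_mul, abs_mul, abs_inv, abs_norm] at huφ
    have : ε < ‖g‖⁻¹ * |φ g| := by rwa [lt_inv_mul_iff₀ hgpos, mul_comm]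
    linarith
  obtain ⟨m, hm, hmN⟩ := (((hφ.tendsto_apply_mulPla hu0).abs.eventually
    (lt_mem_nhds huφ')).and (eventually_ge_atTop N)).exists
  refine ⟨m + 1, by omega, u.mulPla m, fun x => mul_nonneg (hu0 x) (plaProfile_mem_Icc m _).1,
    (u.norm_mulPla_le m).trans (by linarith), hm, fun x hx => ?_, fun x hx => ?_⟩
  · simp [hug x (by simp [hgN x hx])]
  · simp only [dyadicAnnulus, Set.mem_ofPred_eq, not_and_or, not_le] at hx
    push_cast at hx
    rcases hx with hx | hx
    · simp [plaProfile_eq_zero_of_le hx.le]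
    · simp [plaProfile_eq_zero_of_ge hx.le]

theorem exists_abs_apply_le_of_eq_zero_on_annulus (hφ : IsNormal base φ) {ε : ℝ} (hε : 0 < ε) :
    ∃ N : ℕ, ∀ g : Lip0 M base, (∀ x ∈ dyadicAnnulus base N, g x = 0) → |φ g| ≤ ε * ‖g‖ := by
  by_contra! hcon
  choose g hgN hgφ using hcon
  choose m hm v hv0 hvn hvφ hvN hvm using fun N => hφ.exists_nonneg_bump (hgN N) (hgφ N)
  set scale : ℕ → ℕ := fun k => m^[k] 0
  have hscale : ∀ k, scale (k + 1) = m (scale k) := fun k => Function.iterate_succ_apply' m k 0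
  have hmono : Monotone scale := monotone_nat_of_le_succ fun k => (hscale k).symm ▸ hm _
  have hlt : ∀ k l, k < l → ∀ x, v (scale k) x = 0 ∨ v (scale l) x = 0 := by
    intro k l hkl x
    by_cases hx : x ∈ dyadicAnnulus base (scale l)
    · exact Or.inr (hvN _ x hx)
    · refine Or.inl (hvm _ x fun hx' => hx (dyadicAnnulus_mono ?_ hx'))
      exact (hscale k).symm ▸ hmono hkl
  have hdisj : Pairwise fun k l => ∀ x, v (scale k) x = 0 ∨ v (scale l) x = 0 :=
    fun k l hkl x => (lt_or_gt_of_ne hkl).elim (hlt k l · x) fun h => (hlt l k h x).symm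
  obtain ⟨k, hk⟩ := ((hφ.tendsto_zero_of_disjoint _ (fun k => hvn _) (fun k => hv0 _)
    hdisj).abs.eventually (gt_mem_nhds (by rw [abs_zero]; exact half_pos hε))).exists
  exact (hvφ (scale k)).not_gt hk

theorem tendsto_comp_of_radial (hφ : IsNormal base φ) {ι : Type*} {l : Filter ι}
    (T : ι → Lip0 M base →L[ℝ] Lip0 M base) (γ : ι → ℝ → ℝ) {c : ℝ}
    (hT : ∀ i f x, T i f x = f x * γ i (dist x base)) (hγ : ∀ i u, γ i u ∈ Set.Icc 0 1)
    (hosc : ∀ i, OscBound c (γ i))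
    (hone : ∀ N, ∀ᶠ i in l, ∀ x ∈ dyadicAnnulus base N, γ i (dist x base) = 1) :
    Tendsto (fun i => φ.comp (T i)) l (𝓝 φ) := by
  rw [Metric.tendsto_nhds]
  intro δ hδ
  set ε := δ / (2 * (1 + |c|))
  obtain ⟨N, hN⟩ := hφ.exists_abs_apply_le_of_eq_zero_on_annulus (ε := ε) (by positivity)
  filter_upwards [hone N] with i hi
  rw [dist_eq_norm]
  refine lt_of_le_of_lt (ContinuousLinearMap.opNorm_le_bound _ (by positivity) fun f => ?_)
    (half_lt_self hδ)
  set g := T i f - f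
  have hg : ∀ x, g x = f x * (γ i (dist x base) - 1) := fun x => by simp [g, hT]; ring
  have hgn : ‖g‖ ≤ (1 + c) * ‖f‖ := Lip0.norm_le_of_apply_eq_mul_radial
    (fun u => abs_sub_le_of_nonneg_of_le (hγ i u).1 (hγ i u).2 zero_le_one le_rfl)
    ((hosc i).sub_const 1) hg
  calc ‖(φ.comp (T i) - φ) f‖ = |φ g| := by simp [g, map_sub]
    _ ≤ ε * ‖g‖ := hN g fun x hx => by rw [hg, hi x hx, sub_self, mul_zero]
    _ ≤ ε * ((1 + |c|) * ‖f‖) := by gcongr; exact hgn.trans (by gcongr; exact le_abs_self c)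
    _ = δ / 2 * ‖f‖ := by simp only [ε]; field_simp

end IsNormal

end Normal

theorem normal_decomposition_general (base : M)
    (φ : StrongDual ℝ (Lip0 M base)) (hφ : IsNormal base φ)
    (W : ℤ → (Lip0 M base →L[ℝ] Lip0 M base))
    (hW : ∀ (n : ℤ) (f : Lip0 M base) (x : M), (W n f) x = f x * Lam base n x)
    (WP : ℕ → (Lip0 M base →L[ℝ] Lip0 M base))
    (hWP : ∀ (n : ℕ) (f : Lip0 M base) (x : M), (WP n f) x = f x * Pla base n x) :
    HasSum (fun n : ℤ => φ.comp (W n)) φ ∧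
      Tendsto (fun n : ℕ => φ.comp (WP n)) atTop (𝓝 φ) := by
  constructor
  · have hsum := hφ.tendsto_comp_of_radial (l := atTop) (fun S => ∑ n ∈ S, W n)
      (fun S u => ∑ j ∈ S, lamProfile j u)
      (fun S f x => by simp [Lip0.sum_apply, hW, Lam_eq_lamProfile, Finset.mul_sum])
      (fun S u => sum_lamProfile_mem_Icc S u) oscBound_sum_lamProfile
      fun N => (eventually_ge_atTop (Finset.Icc (-(N:ℤ)) (N + 1))).mono
        fun S hS x hx => sum_lamProfile_eq_one hS hx.1 hx.2
    refine hsum.congr fun S => ?_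
    ext f
    simp [map_sum]
  · exact hφ.tendsto_comp_of_radial WP (fun n => plaProfile n)
      (by simpa only [Pla_eq_plaProfile] using hWP)
      (fun n u => plaProfile_mem_Icc n u) oscBound_plaProfile
      fun N => (eventually_ge_atTop N).mono fun n hn x hx =>
        plaProfile_eq_one (dyadicAnnulus_mono hn hx).1 (dyadicAnnulus_mono hn hx).2

/-- if `φ` is normal, then `φ = Σ_{n∈ℤ} φ ∘ W_{Λ_n} = lim_n φ ∘ W_{Π_n}`
in the norm of `F(M)** = Lip₀(M)*`. -/
theorem normal_decomposition [CompleteSpace M] (base : M)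
    (φ : StrongDual ℝ (Lip0 M base)) (hφ : IsNormal base φ)
    (W : ℤ → (Lip0 M base →L[ℝ] Lip0 M base))
    (hW : ∀ (n : ℤ) (f : Lip0 M base) (x : M), (W n f) x = f x * Lam base n x)
    (WP : ℕ → (Lip0 M base →L[ℝ] Lip0 M base))
    (hWP : ∀ (n : ℕ) (f : Lip0 M base) (x : M), (WP n f) x = f x * Pla base n x) :
    HasSum (fun n : ℤ => φ.comp (W n)) φ ∧
      Tendsto (fun n : ℕ => φ.comp (WP n)) atTop (𝓝 φ) :=
  normal_decomposition_general base φ hφ W hW WP hWP
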